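/- Unitality transfer: let M ⊆ B(H', K') be a TRO such that the identity I_{K'} lies in the closure of span(M M*) via a net I_{K'} = lim_λ Σ_i m_i^λ (m_i^λ)*. Let D = closure(span(M* M)) and suppose ψ: B(H') ⊇ Y → B(H) is as in the bimodule setup with ψ(I_{H'}) given, and construct K = M ⊗_D H with the induced inner product ⟨m ⊗ ξ, n ⊗ ω⟩ = ⟨π(n* m) ξ, ω⟩. Then the induced map φ with φ(m s n*)(l ⊗ ξ) = m ⊗ ψ(s n* l)(ξ) sends I_{K'} to I_K, i.e., φ is unital. -/

import Mathlib

/-!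
The tensor `m ⊗ ξ` is balanced over `D`, `m ⊗ π(n* l) ξ = m n* l ⊗ ξ`, because both sides have
the same inner products with the total family of elementary tensors. Together with the defining
formula for `φ`, this says that on elementary tensors `φ(m n*)` acts by left multiplication on
the first factor; by linearity and continuity the same holds for every `T` in the closed span of
`M M*`, in particular for `T = I`, and totality of the elementary tensors gives `φ(I) = I`.
-/

open ContinuousLinearMap

noncomputable section

/-- Norm closure of the linear span of a set. -/
def csp {E : Type*} [NormedAddCommGroup E] [NormedSpace ℂ E] (S : Set E) : Set E :=
  closure (Submodule.span ℂ S : Set E)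

theorem eq_of_inner_left_of_csp_eq_univ {E : Type*} [NormedAddCommGroup E]
    [InnerProductSpace ℂ E] {S : Set E} (hS : csp S = Set.univ) {x y : E}
    (h : ∀ v ∈ S, inner ℂ x v = inner ℂ y v) : x = y :=
  innerSL_inj.mp <| ContinuousLinearMap.ext_on (dense_iff_closure_eq.mpr hS) h

section TRO

variable {H' K' H K₀ : Type*}
  [NormedAddCommGroup H'] [InnerProductSpace ℂ H'] [NormedAddCommGroup K'] [InnerProductSpace ℂ K']
  [NormedAddCommGroup H] [InnerProductSpace ℂ H] [NormedAddCommGroup K₀] [InnerProductSpace ℂ K₀]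
  {M : Submodule ℂ (H' →L[ℂ] K')} {θ : (H' →L[ℂ] K') →ₗ[ℂ] H →ₗ[ℂ] K₀}

theorem tensor_balanced [CompleteSpace H'] [CompleteSpace K']
    (hTRO : ∀ m ∈ M, ∀ n ∈ M, ∀ l ∈ M, m ∘L (adjoint n) ∘L l ∈ M)
    {π : (H' →L[ℂ] H') →ₗ[ℂ] (H →L[ℂ] H)}
    (hπmul : ∀ m ∈ M, ∀ n ∈ M, ∀ m' ∈ M, ∀ n' ∈ M,
      π ((adjoint m ∘L n) ∘L (adjoint m' ∘L n')) = π (adjoint m ∘L n) ∘L π (adjoint m' ∘L n'))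
    (hinner : ∀ m ∈ M, ∀ n ∈ M, ∀ (ξ ω : H),
      (inner ℂ (θ m ξ) (θ n ω) : ℂ) = inner ℂ (π ((adjoint n) ∘L m) ξ) ω)
    (htotal : csp {v : K₀ | ∃ l ∈ M, ∃ ξ : H, v = θ l ξ} = Set.univ)
    {m n l : H' →L[ℂ] K'} (hm : m ∈ M) (hn : n ∈ M) (hl : l ∈ M) (ξ : H) :
    θ m (π (adjoint n ∘L l) ξ) = θ (m ∘L adjoint n ∘L l) ξ := by
  refine eq_of_inner_left_of_csp_eq_univ htotal ?_
  rintro _ ⟨n', hn', ω, rfl⟩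
  have hassoc : adjoint n' ∘L m ∘L adjoint n ∘L l = (adjoint n' ∘L m) ∘L (adjoint n ∘L l) := by
    simp only [comp_assoc]
  rw [hinner _ hm _ hn', hinner _ (hTRO _ hm _ hn _ hl) _ hn', hassoc, hπmul _ hn' _ hm _ hn _ hl,
    comp_apply]

theorem apply_tensor_of_mem_csp (hθ : ∀ ξ : H, Continuous fun T => θ T ξ)
    (φ : (K' →L[ℂ] K') →L[ℂ] (K₀ →L[ℂ] K₀)) {S : Set (K' →L[ℂ] K')}
    (hS : ∀ T ∈ S, ∀ l ∈ M, ∀ ξ : H, φ T (θ l ξ) = θ (T ∘L l) ξ)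
    {T : K' →L[ℂ] K'} (hT : T ∈ csp S) {l : H' →L[ℂ] K'} (hl : l ∈ M) (ξ : H) :
    φ T (θ l ξ) = θ (T ∘L l) ξ := by
  let A : Submodule ℂ (K' →L[ℂ] K') :=
    { carrier := {T | φ T (θ l ξ) = θ (T ∘L l) ξ}
      add_mem' := fun {a b} (ha : φ a _ = _) (hb : φ b _ = _) => show φ (a + b) _ = _ by
        simp only [map_add, add_apply, ha, hb, add_comp, LinearMap.add_apply]
      zero_mem' := by simp
      smul_mem' := fun c a (ha : φ a _ = _) => show φ (c • a) _ = _ by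
        simp only [map_smul, smul_apply, ha, smul_comp, LinearMap.smul_apply] }
  have hA : IsClosed (A : Set (K' →L[ℂ] K')) :=
    isClosed_eq (by fun_prop) ((hθ ξ).comp (continuous_id.clm_comp continuous_const))
  exact closure_minimal (Submodule.span_le.mpr fun T hT => hS T hT l hl ξ) hA hT

end TRO

theorem stmt15 {H' K' H K₀ : Type*}
    [NormedAddCommGroup H'] [InnerProductSpace ℂ H'] [CompleteSpace H']
    [NormedAddCommGroup K'] [InnerProductSpace ℂ K'] [CompleteSpace K']
    [NormedAddCommGroup H] [InnerProductSpace ℂ H]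
    [NormedAddCommGroup K₀] [InnerProductSpace ℂ K₀]
    (M : Submodule ℂ (H' →L[ℂ] K'))
    (hTRO : ∀ m ∈ M, ∀ n ∈ M, ∀ l ∈ M, m ∘L (adjoint n) ∘L l ∈ M)
    (π : (H' →L[ℂ] H') →ₗ[ℂ] (H →L[ℂ] H))
    (hπmul : ∀ S ∈ csp {T : H' →L[ℂ] H' | ∃ m ∈ M, ∃ n ∈ M, T = (adjoint m) ∘L n},
      ∀ T ∈ csp {T : H' →L[ℂ] H' | ∃ m ∈ M, ∃ n ∈ M, T = (adjoint m) ∘L n},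
        π (S ∘L T) = (π S) ∘L (π T))
    -- `θ m ξ` plays the role of the elementary tensor `m ⊗ ξ ∈ K₀ = M ⊗_D H`
    (θ : (H' →L[ℂ] K') →ₗ[ℂ] H →ₗ[ℂ] K₀)
    (hθbound : ∀ (T : H' →L[ℂ] K') (ξ : H), ‖θ T ξ‖ ≤ ‖T‖ * ‖ξ‖)
    (hinner : ∀ m ∈ M, ∀ n ∈ M, ∀ (ξ ω : H),
      (inner ℂ (θ m ξ) (θ n ω) : ℂ) = inner ℂ (π ((adjoint n) ∘L m) ξ) ω)
    (htotal : csp {v : K₀ | ∃ l ∈ M, ∃ ξ : H, v = θ l ξ} = Set.univ)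
    (φ : (K' →L[ℂ] K') →L[ℂ] (K₀ →L[ℂ] K₀))
    (hφ : ∀ m ∈ M, ∀ n ∈ M, ∀ l ∈ M, ∀ ξ : H,
      (φ (m ∘L (adjoint n))) (θ l ξ) = θ m (π ((adjoint n) ∘L l) ξ))
    {ι : Type*} (F : Filter ι) [F.NeBot] (f : ι → (K' →L[ℂ] K'))
    (hf : ∀ i, f i ∈ AddSubmonoid.closure {T : K' →L[ℂ] K' | ∃ m ∈ M, T = m ∘L (adjoint m)})
    (hfI : Filter.Tendsto f F (nhds (ContinuousLinearMap.id ℂ K'))) :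
    φ (ContinuousLinearMap.id ℂ K') = ContinuousLinearMap.id ℂ K₀ := by
  have hgen : ∀ m ∈ M, ∀ n ∈ M,
      adjoint m ∘L n ∈ csp {T : H' →L[ℂ] H' | ∃ m ∈ M, ∃ n ∈ M, T = (adjoint m) ∘L n} :=
    fun m hm n hn => subset_closure (Submodule.subset_span ⟨m, hm, n, hn, rfl⟩)
  have hθ (ξ : H) : Continuous fun T => θ T ξ :=
    AddMonoidHomClass.continuous_of_bound (θ.flip ξ) ‖ξ‖ fun T => by
      simpa only [LinearMap.flip_apply, mul_comm] using hθbound T ξ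
  set S := {T : K' →L[ℂ] K' | ∃ m ∈ M, T = m ∘L adjoint m}
  have hS : ∀ T ∈ S, ∀ l ∈ M, ∀ ξ : H, φ T (θ l ξ) = θ (T ∘L l) ξ := by
    rintro _ ⟨m, hm, rfl⟩ l hl ξ
    rw [hφ _ hm _ hm _ hl, comp_assoc,
      tensor_balanced hTRO (fun m hm n hn m' hm' n' hn' => hπmul _ (hgen _ hm _ hn) _
        (hgen _ hm' _ hn')) hinner htotal hm hm hl]
  have hid : ContinuousLinearMap.id ℂ K' ∈ csp S :=
    mem_closure_of_tendsto hfI (Filter.Eventually.of_forall fun i =>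
      AddSubmonoid.closure_le.mpr (fun _ hT => Submodule.subset_span hT) (hf i))
  refine ContinuousLinearMap.ext_on (dense_iff_closure_eq.mpr htotal) ?_
  rintro _ ⟨l, hl, ξ, rfl⟩
  exact apply_tensor_of_mem_csp hθ φ hS hid hl ξ
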